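/- arXiv:1711.03868 — 5 statements merged into one kernel-verified Lean document; each statement's English description precedes it below -/
import Mathlib

section
/- Let G be a finite simple graph with n vertices, m edges and degree sequence d_1,…,d_n, and let α be a real number. Then the coefficient of x^{n-2} in the characteristic polynomial det(x·I_n − A_α(G)) equals 2α²m² − (1−α)²m − (1/2)α²·Σ_{r=1}^n d_r²; equivalently, c_{α2}(G) = 2α²m² − (1−α)²m − (1/2)α²Σ_r d_r². -/
/-!
`A_α(G)` is real symmetric, so its characteristic polynomial is `∏ (x - λᵢ)` and the coefficient
of `x^(n-2)` is `e₂(λ) = ((∑ λᵢ)² - ∑ λᵢ²) / 2 = (tr(A_α)² - tr(A_α²)) / 2`. Both traces are read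
off the entries: `tr A_α = α ∑ d_v = 2αm`, and `tr A_α² = α² ∑ d_v² + (1-α)² tr A²` with
`tr A² = ∑ d_v = 2m`; the cross terms `tr (D A)` vanish because `A` has zero diagonal.
-/

open Matrix Polynomial

theorem Finset.two_mul_coeff_prod_X_sub_C {R ι : Type*} [CommRing R] (s : Finset ι) (f : ι → R)
    {k : ℕ} (hk : s.card = k + 2) :
    2 * (∏ i ∈ s, (X - C (f i))).coeff k = (∑ i ∈ s, f i) ^ 2 - ∑ i ∈ s, f i ^ 2 := by
  induction s using Finset.cons_induction generalizing k with
  | empty => simp at hk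
  | cons a s ha ih =>
    rw [Finset.card_cons] at hk
    rw [Finset.prod_cons, Finset.sum_cons, Finset.sum_cons, sub_mul, coeff_sub, coeff_C_mul]
    cases k with
    | zero =>
      obtain ⟨b, rfl⟩ := Finset.card_eq_one.mp (by omega : s.card = 1)
      simp only [prod_singleton, sum_singleton, mul_coeff_zero, coeff_X_zero, coeff_sub,
        coeff_C_zero]
      ring
    | succ k =>
      have hsum : (∏ i ∈ s, (X - C (f i))).coeff (k + 1) = -∑ i ∈ s, f i := by
        rw [show k + 1 = s.card - 1 by omega]
        exact prod_X_sub_C_coeff_card_pred s f (by omega)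
      rw [coeff_X_mul, mul_sub, ih (by omega), hsum]
      ring

namespace Matrix.IsHermitian

variable {𝕜 n : Type*} [RCLike 𝕜] [Fintype n] [DecidableEq n] {A : Matrix n n 𝕜}

theorem trace_mul_self_eq_sum_sq (hA : A.IsHermitian) :
    (A * A).trace = ∑ i, (hA.eigenvalues i : 𝕜) ^ 2 := by
  conv_lhs => rw [hA.spectral_theorem, ← map_mul, Unitary.conjStarAlgAut_apply, trace_mul_cycle,
    Unitary.coe_star_mul_self, one_mul, diagonal_mul_diagonal, trace_diagonal]
  simp [sq]

theorem two_mul_charpoly_coeff_card_sub_two (hA : A.IsHermitian) (hn : 2 ≤ Fintype.card n) :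
    2 * A.charpoly.coeff (Fintype.card n - 2) = A.trace ^ 2 - (A * A).trace := by
  rw [hA.charpoly_eq, hA.trace_eq_sum_eigenvalues, hA.trace_mul_self_eq_sum_sq]
  exact Finset.univ.two_mul_coeff_prod_X_sub_C _ (by simp; omega)

end Matrix.IsHermitian

namespace SimpleGraph

variable {V R : Type*} [Fintype V] (G : SimpleGraph V) [DecidableRel G.Adj] [CommRing R]

theorem sum_cast_degrees_eq_twice_card_edges : ∑ v, (G.degree v : R) = 2 * G.edgeFinset.card := by
  rw [← Nat.cast_sum, sum_degrees_eq_twice_card_edges, Nat.cast_mul, Nat.cast_ofNat]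

theorem trace_adjMatrix_mul_self :
    (G.adjMatrix R * G.adjMatrix R).trace = 2 * G.edgeFinset.card := by
  simp only [trace, diag, adjMatrix_mul_self_apply_self]
  exact G.sum_cast_degrees_eq_twice_card_edges

variable [DecidableEq V]

def alphaAdjMatrix (α : R) : Matrix V V R :=
  α • diagonal (fun v => (G.degree v : R)) + (1 - α) • G.adjMatrix R

theorem isSymm_alphaAdjMatrix (α : R) : (G.alphaAdjMatrix α).IsSymm := by
  simp [alphaAdjMatrix, IsSymm, transpose_add, transpose_smul, transpose_adjMatrix]

theorem trace_alphaAdjMatrix (α : R) :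
    (G.alphaAdjMatrix α).trace = 2 * α * G.edgeFinset.card := by
  simp only [alphaAdjMatrix, trace_add, trace_smul, trace_diagonal, trace_adjMatrix, smul_eq_mul,
    G.sum_cast_degrees_eq_twice_card_edges]
  ring

theorem trace_alphaAdjMatrix_mul_self (α : R) :
    (G.alphaAdjMatrix α * G.alphaAdjMatrix α).trace
      = α ^ 2 * ∑ v, (G.degree v : R) ^ 2 + 2 * (1 - α) ^ 2 * G.edgeFinset.card := by
  have hDA : (diagonal (fun v => (G.degree v : R)) * G.adjMatrix R).trace = 0 := by
    simp only [trace, diag, diagonal_mul, adjMatrix_apply, SimpleGraph.irrefl, if_false, mul_zero,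
      Finset.sum_const_zero]
  have hAD : (G.adjMatrix R * diagonal (fun v => (G.degree v : R))).trace = 0 := by
    rw [trace_mul_comm, hDA]
  simp only [alphaAdjMatrix, add_mul, mul_add, smul_mul_smul_comm, trace_add, trace_smul, hDA, hAD,
    trace_adjMatrix_mul_self, diagonal_mul_diagonal, trace_diagonal, smul_eq_mul, sq]
  ring

end SimpleGraph

/-- For a finite simple graph `G` with `n ≥ 2` vertices, `m` edges and degree
sequence `(d_v)`, and a real number `α`, the coefficient of `x^(n-2)` in
`det(x·I − A_α(G))`, where `A_α(G) = α·D(G) + (1−α)·A(G)`, equals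
`2α²m² − (1−α)²m − (1/2)α²·Σ_v d_v²`. -/
theorem coeff_two_Aalpha_charpoly {V : Type*} [Fintype V] [DecidableEq V]
    (G : SimpleGraph V) [DecidableRel G.Adj] (α : ℝ)
    (hn : 2 ≤ Fintype.card V) :
    (Matrix.charpoly
        (α • Matrix.diagonal (fun v => (G.degree v : ℝ)) + (1 - α) • G.adjMatrix ℝ)).coeff
      (Fintype.card V - 2)
      = 2 * α ^ 2 * (G.edgeFinset.card : ℝ) ^ 2 - (1 - α) ^ 2 * (G.edgeFinset.card : ℝ)
        - (1 / 2) * α ^ 2 * ∑ v, (G.degree v : ℝ) ^ 2 := by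
  change (G.alphaAdjMatrix α).charpoly.coeff _ = _
  have hA : (G.alphaAdjMatrix α).IsHermitian :=
    isHermitian_iff_isSymm.mpr (G.isSymm_alphaAdjMatrix α)
  have h := hA.two_mul_charpoly_coeff_card_sub_two hn
  rw [G.trace_alphaAdjMatrix, G.trace_alphaAdjMatrix_mul_self] at h
  linear_combination h / 2
end

section
/- Let G be a finite simple graph with n vertices, m edges, degree sequence d_1,…,d_n, and t_G triangles, and let α be a real number. Then the coefficient of x^{n-3} in the characteristic polynomial det(x·I_n − A_α(G)) equals −(1/3)·( 6(1−α)³t_G − 6α(1−α)²m² + 3α(1−α)²Σ_r d_r² + α³(4m³ − 3m·Σ_r d_r² + Σ_r d_r³) ). -/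
open Matrix Polynomial BigOperators

section AuxLinearAlgebra

variable {n : Type*} [Fintype n] [DecidableEq n] {R : Type*} [CommRing R]

lemma charpoly_conj_aux (P Q M : Matrix n n R) (h1 : P * Q = 1) :
    (P * M * Q).charpoly = M.charpoly := by
  have hc : ∀ B : Matrix n n R,
      Matrix.scalar n (X : R[X]) * (C : R →+* R[X]).mapMatrix B
        = (C : R →+* R[X]).mapMatrix B * Matrix.scalar n (X : R[X]) :=
    fun B => (Matrix.scalar_commute (X : R[X]) (fun r => Commute.all X r) _).eq
  have key : charmatrix (P * M * Q) =
      (C : R →+* R[X]).mapMatrix P * charmatrix M * (C : R →+* R[X]).mapMatrix Q := by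
    unfold charmatrix
    rw [mul_sub, sub_mul]
    congr 1
    · rw [← hc P, mul_assoc, ← RingHom.map_mul ((C : R →+* R[X]).mapMatrix) P Q, h1,
        RingHom.map_one, mul_one]
    · rw [RingHom.map_mul, RingHom.map_mul]
  have h3 : ((C : R →+* R[X]).mapMatrix P).det * ((C : R →+* R[X]).mapMatrix Q).det = 1 := by
    rw [← Matrix.det_mul, ← RingHom.map_mul ((C : R →+* R[X]).mapMatrix) P Q, h1,
      RingHom.map_one, det_one]
  unfold Matrix.charpoly
  rw [key, Matrix.det_mul, Matrix.det_mul]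
  linear_combination (charmatrix M).det * h3

lemma charpoly_diagonal (e : n → R) :
    (Matrix.diagonal e).charpoly = ∏ i, (X - C (e i)) := by
  unfold Matrix.charpoly
  have : charmatrix (Matrix.diagonal e) = Matrix.diagonal fun i => X - C (e i) := by
    ext i j
    rcases eq_or_ne i j with rfl | h
    · simp
    · simp [h, charmatrix_apply_ne _ _ _ h]
  rw [this, det_diagonal]

lemma coeff_prod_X_sub_C (e : n → ℝ) (h : 3 ≤ Fintype.card n) :
    (∏ i, (X - C (e i))).coeff (Fintype.card n - 3)
      = - ∑ A ∈ Finset.univ.powersetCard 3, ∏ i ∈ A, e i := by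
  have hcard : (Multiset.card (Finset.univ.val.map e)) = Fintype.card n := by
    rw [Multiset.card_map]; rfl
  have hprod : (∏ i, (X - C (e i)))
      = ((Finset.univ.val.map e).map fun r => X - C r).prod := by
    rw [Multiset.map_map]
    rfl
  rw [hprod, Multiset.prod_X_sub_C_coeff _ (by rw [hcard]; omega), hcard]
  have h3 : Fintype.card n - (Fintype.card n - 3) = 3 := by omega
  rw [h3, Finset.esymm_map_val]
  ring

end AuxLinearAlgebra

section Newton

variable {α : Type*} [DecidableEq α]

lemma sum_powersetCard_insert (e : α → ℝ) {a : α} {s : Finset α} (ha : a ∉ s) (k : ℕ) :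
    ∑ A ∈ (insert a s).powersetCard (k+1), ∏ i ∈ A, e i
      = (∑ A ∈ s.powersetCard (k+1), ∏ i ∈ A, e i)
        + e a * ∑ A ∈ s.powersetCard k, ∏ i ∈ A, e i := by
  rw [Finset.powersetCard_succ_insert ha, Finset.sum_union, Finset.sum_image]
  · have hins : ∀ A ∈ s.powersetCard k, ∏ i ∈ insert a A, e i = e a * ∏ i ∈ A, e i := by
      intro A hA
      refine Finset.prod_insert fun hmem => ha ((Finset.mem_powersetCard.mp hA).1 hmem)
    rw [Finset.sum_congr rfl hins, ← Finset.mul_sum]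
  · intro A hA B hB hAB
    have haA : a ∉ A := fun hm => ha ((Finset.mem_powersetCard.mp hA).1 hm)
    have haB : a ∉ B := fun hm => ha ((Finset.mem_powersetCard.mp hB).1 hm)
    have := congrArg (fun t => Finset.erase t a) hAB
    simpa [Finset.erase_insert, haA, haB] using this
  · rw [Finset.disjoint_left]
    intro A hA hA'
    obtain ⟨B, hB, rfl⟩ := Finset.mem_image.mp hA'
    exact ha ((Finset.mem_powersetCard.mp hA).1 (Finset.mem_insert_self a B))

omit [DecidableEq α] in
lemma sum_powersetCard_one (e : α → ℝ) (s : Finset α) :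
    ∑ A ∈ s.powersetCard 1, ∏ i ∈ A, e i = ∑ i ∈ s, e i := by
  rw [Finset.powersetCard_one]
  simp [Finset.sum_map]

lemma newton2 (e : α → ℝ) (s : Finset α) :
    2 * ∑ A ∈ s.powersetCard 2, ∏ i ∈ A, e i
      = (∑ i ∈ s, e i) ^ 2 - ∑ i ∈ s, e i ^ 2 := by
  induction s using Finset.induction_on with
  | empty => rw [Finset.powersetCard_eq_empty.mpr (by simp)]; simp
  | @insert a s ha ih =>
    rw [show (2:ℕ) = 1+1 from rfl, sum_powersetCard_insert e ha, sum_powersetCard_one,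
      Finset.sum_insert ha, Finset.sum_insert ha]
    rw [show (1:ℕ)+1 = 2 from rfl] at *
    linear_combination ih

lemma newton3 (e : α → ℝ) (s : Finset α) :
    6 * ∑ A ∈ s.powersetCard 3, ∏ i ∈ A, e i
      = (∑ i ∈ s, e i) ^ 3 - 3 * (∑ i ∈ s, e i) * (∑ i ∈ s, e i ^ 2)
        + 2 * ∑ i ∈ s, e i ^ 3 := by
  induction s using Finset.induction_on with
  | empty => rw [Finset.powersetCard_eq_empty.mpr (by simp)]; simp
  | @insert a s ha ih =>
    have h2 := newton2 e s
    rw [show (3:ℕ) = 2+1 from rfl, sum_powersetCard_insert e ha,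
      Finset.sum_insert ha, Finset.sum_insert ha, Finset.sum_insert ha]
    rw [show (2:ℕ)+1 = 3 from rfl] at *
    linear_combination ih + 3 * e a * h2

end Newton

section Spectral

variable {n : Type*} [Fintype n] [DecidableEq n]

lemma charpoly_coeff_card_sub_three {M : Matrix n n ℝ} (hM : M.IsHermitian)
    (h : 3 ≤ Fintype.card n) :
    M.charpoly.coeff (Fintype.card n - 3)
      = -(1/6) * ((Matrix.trace M)^3 - 3 * Matrix.trace M * Matrix.trace (M^2)
          + 2 * Matrix.trace (M^3)) := by
  set U : Matrix n n ℝ := (hM.eigenvectorUnitary : Matrix n n ℝ) with hU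
  set e : n → ℝ := hM.eigenvalues with he
  have hU1 : U * star U = 1 := (Matrix.mem_unitaryGroup_iff).mp hM.eigenvectorUnitary.2
  have hU2 : star U * U = 1 := (Matrix.mem_unitaryGroup_iff').mp hM.eigenvectorUnitary.2
  have hofReal : (RCLike.ofReal ∘ e : n → ℝ) = e := by
    funext i; simp [RCLike.ofReal_real_eq_id]
  have hspec : M = U * Matrix.diagonal e * star U := by
    conv_lhs => rw [hM.spectral_theorem]
    rw [hofReal, Unitary.conjStarAlgAut_apply]
  have hpow : ∀ k : ℕ, 0 < k → M ^ k = U * Matrix.diagonal e ^ k * star U := by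
    intro k hk
    induction k with
    | zero => omega
    | succ k ih =>
      rcases Nat.eq_zero_or_pos k with rfl | hk'
      · simpa using hspec
      · rw [pow_succ, ih hk', pow_succ, hspec]
        rw [Matrix.mul_assoc (U * Matrix.diagonal e ^ k)]
        have hstep : star U * (U * Matrix.diagonal e * star U)
            = Matrix.diagonal e * star U := by
          rw [← Matrix.mul_assoc, ← Matrix.mul_assoc, hU2, one_mul]
        rw [hstep]
        noncomm_ring
  have htr : ∀ k : ℕ, 0 < k → Matrix.trace (M ^ k) = ∑ i, e i ^ k := by
    intro k hk
    rw [hpow k hk, Matrix.trace_mul_cycle, hU2, one_mul,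
      Matrix.diagonal_pow, Matrix.trace_diagonal]
    simp
  have hchar : M.charpoly = (Matrix.diagonal e).charpoly := by
    conv_lhs => rw [hspec]
    exact charpoly_conj_aux U (star U) _ hU1
  have h1 : Matrix.trace M = ∑ i, e i := by simpa using htr 1 one_pos
  have h2 := htr 2 two_pos
  have h3 := htr 3 three_pos
  have hn := newton3 e Finset.univ
  rw [hchar, _root_.charpoly_diagonal, coeff_prod_X_sub_C e h, h1, h2, h3]
  linear_combination (-1/6 : ℝ) * hn

end Spectral

section GraphCounting

variable {V : Type*} [Fintype V] [DecidableEq V] (G : SimpleGraph V) [DecidableRel G.Adj]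

lemma card_ordered_triangles :
    (Finset.univ.filter (fun p : V × V × V =>
        G.Adj p.1 p.2.1 ∧ G.Adj p.2.1 p.2.2 ∧ G.Adj p.2.2 p.1)).card
      = 6 * (G.cliqueFinset 3).card := by
  set O := Finset.univ.filter (fun p : V × V × V =>
      G.Adj p.1 p.2.1 ∧ G.Adj p.2.1 p.2.2 ∧ G.Adj p.2.2 p.1) with hO
  have hmap : ∀ p ∈ O, ({p.1, p.2.1, p.2.2} : Finset V) ∈ G.cliqueFinset 3 := by
    rintro ⟨x, y, z⟩ hp
    simp only [hO, Finset.mem_filter] at hp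
    obtain ⟨-, h1, h2, h3⟩ := hp
    rw [SimpleGraph.mem_cliqueFinset_iff]
    exact SimpleGraph.is3Clique_triple_iff.mpr ⟨h1, h3.symm, h2⟩
  rw [Finset.card_eq_sum_card_fiberwise hmap]
  rw [Finset.sum_congr rfl (fun T hT => ?_), Finset.sum_const, smul_eq_mul, mul_comm]
  rw [SimpleGraph.mem_cliqueFinset_iff, SimpleGraph.is3Clique_iff] at hT
  obtain ⟨a, b, c, hab, hac, hbc, rfl⟩ := hT
  have hab' : a ≠ b := hab.ne
  have hac' : a ≠ c := hac.ne
  have hbc' : b ≠ c := hbc.ne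
  have hfiber : O.filter (fun p : V × V × V => ({p.1, p.2.1, p.2.2} : Finset V) = {a, b, c})
      = ({(a,b,c), (a,c,b), (b,a,c), (b,c,a), (c,a,b), (c,b,a)} : Finset (V × V × V)) := by
    ext ⟨x, y, z⟩
    simp only [hO, Finset.mem_filter, Finset.mem_univ, true_and, Finset.mem_insert,
      Finset.mem_singleton, Prod.mk.injEq]
    constructor
    · rintro ⟨⟨h1, h2, h3⟩, hset⟩
      have hx : x = a ∨ x = b ∨ x = c := by
        have : x ∈ ({a, b, c} : Finset V) := hset ▸ (by simp)
        simpa using this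
      have hy : y = a ∨ y = b ∨ y = c := by
        have : y ∈ ({a, b, c} : Finset V) := hset ▸ (by simp)
        simpa using this
      have hz : z = a ∨ z = b ∨ z = c := by
        have : z ∈ ({a, b, c} : Finset V) := hset ▸ (by simp)
        simpa using this
      have hxy : x ≠ y := h1.ne
      have hyz : y ≠ z := h2.ne
      have hzx : z ≠ x := h3.ne
      rcases hx with rfl | rfl | rfl <;> rcases hy with rfl | rfl | rfl <;>
        rcases hz with rfl | rfl | rfl <;> simp_all
    · have hset1 : ({a, c, b} : Finset V) = {a, b, c} := by
        ext w; simp; tauto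
      have hset2 : ({b, a, c} : Finset V) = {a, b, c} := by
        ext w; simp; tauto
      have hset3 : ({b, c, a} : Finset V) = {a, b, c} := by
        ext w; simp; tauto
      have hset4 : ({c, a, b} : Finset V) = {a, b, c} := by
        ext w; simp; tauto
      have hset5 : ({c, b, a} : Finset V) = {a, b, c} := by
        ext w; simp; tauto
      rintro (⟨rfl, rfl, rfl⟩ | ⟨rfl, rfl, rfl⟩ | ⟨rfl, rfl, rfl⟩ | ⟨rfl, rfl, rfl⟩ |
        ⟨rfl, rfl, rfl⟩ | ⟨rfl, rfl, rfl⟩)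
      · exact ⟨⟨hab, hbc, hac.symm⟩, rfl⟩
      · exact ⟨⟨hac, hbc.symm, hab.symm⟩, hset1⟩
      · exact ⟨⟨hab.symm, hac, hbc.symm⟩, hset2⟩
      · exact ⟨⟨hbc, hac.symm, hab⟩, hset3⟩
      · exact ⟨⟨hac.symm, hab, hbc⟩, hset4⟩
      · exact ⟨⟨hbc.symm, hab.symm, hac⟩, hset5⟩
  rw [hfiber]
  repeat rw [Finset.card_insert_of_notMem (by simp [Prod.ext_iff]; tauto)]
  simp

lemma trace_adjMatrix_cube :
    Matrix.trace (G.adjMatrix ℝ * G.adjMatrix ℝ * G.adjMatrix ℝ)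
      = 6 * ((G.cliqueFinset 3).card : ℝ) := by
  have h1 : Matrix.trace (G.adjMatrix ℝ * G.adjMatrix ℝ * G.adjMatrix ℝ)
      = ∑ v, ∑ k, ∑ j, G.adjMatrix ℝ v k * G.adjMatrix ℝ k j * G.adjMatrix ℝ j v := by
    rw [Matrix.trace]
    refine Finset.sum_congr rfl fun v _ => ?_
    rw [Matrix.diag_apply, Matrix.mul_apply]
    rw [Finset.sum_comm]
    refine Finset.sum_congr rfl fun k _ => ?_
    rw [Matrix.mul_apply, Finset.sum_mul]
  have h2 : ∀ v k j : V, G.adjMatrix ℝ v k * G.adjMatrix ℝ k j * G.adjMatrix ℝ j v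
      = if (G.Adj v k ∧ G.Adj k j ∧ G.Adj j v) then (1:ℝ) else 0 := by
    intro v k j
    by_cases hvk : G.Adj v k <;> by_cases hkj : G.Adj k j <;> by_cases hjv : G.Adj j v <;>
      simp [hvk, hkj, hjv]
  rw [h1]
  simp_rw [h2]
  have h3 : (∑ v : V, ∑ k : V, ∑ j : V,
      if G.Adj v k ∧ G.Adj k j ∧ G.Adj j v then (1:ℝ) else 0)
      = ∑ p : V × V × V,
          if G.Adj p.1 p.2.1 ∧ G.Adj p.2.1 p.2.2 ∧ G.Adj p.2.2 p.1 then (1:ℝ) else 0 := by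
    rw [Fintype.sum_prod_type]
    refine Finset.sum_congr rfl fun v _ => ?_
    rw [Fintype.sum_prod_type]
  rw [h3, Finset.sum_boole]
  have := card_ordered_triangles G
  push_cast [this]
  ring

lemma trace_diag_mul_adj (w : V → ℝ) :
    Matrix.trace (Matrix.diagonal w * G.adjMatrix ℝ) = 0 := by
  rw [Matrix.trace]
  refine Finset.sum_eq_zero fun v _ => ?_
  rw [Matrix.diag_apply, Matrix.diagonal_mul]
  simp

lemma trace_diag_mul_adj_sq (w : V → ℝ) :
    Matrix.trace (Matrix.diagonal w * G.adjMatrix ℝ * G.adjMatrix ℝ)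
      = ∑ v, w v * (G.degree v : ℝ) := by
  rw [Matrix.mul_assoc, Matrix.trace]
  refine Finset.sum_congr rfl fun v _ => ?_
  rw [Matrix.diag_apply, Matrix.diagonal_mul, SimpleGraph.adjMatrix_mul_self_apply_self]

lemma trace_adj_sq :
    Matrix.trace (G.adjMatrix ℝ * G.adjMatrix ℝ) = ∑ v, (G.degree v : ℝ) := by
  rw [Matrix.trace]
  refine Finset.sum_congr rfl fun v _ => ?_
  rw [Matrix.diag_apply, SimpleGraph.adjMatrix_mul_self_apply_self]

end GraphCounting

/-- For a finite simple graph `G` with `n ≥ 3` vertices, `m` edges, degree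
sequence `(d_v)` and `t_G` triangles, and a real number `α`,
the coefficient of `x^(n-3)` in `det(x·I − A_α(G))`, where `A_α(G) = α·D(G) + (1−α)·A(G)`,
equals `−(1/3)(6(1−α)³t_G − 6α(1−α)²m² + 3α(1−α)²Σ d² + α³(4m³ − 3m·Σ d² + Σ d³))`. -/
theorem coeff_three_Aalpha_charpoly {V : Type*} [Fintype V] [DecidableEq V]
    (G : SimpleGraph V) [DecidableRel G.Adj] (α : ℝ)
    (hn : 3 ≤ Fintype.card V) :
    (Matrix.charpoly
        (α • Matrix.diagonal (fun v => (G.degree v : ℝ)) + (1 - α) • G.adjMatrix ℝ)).coeff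
      (Fintype.card V - 3)
      = -(1 / 3) * (6 * (1 - α) ^ 3 * ((G.cliqueFinset 3).card : ℝ)
          - 6 * α * (1 - α) ^ 2 * (G.edgeFinset.card : ℝ) ^ 2
          + 3 * α * (1 - α) ^ 2 * ∑ v, (G.degree v : ℝ) ^ 2
          + α ^ 3 * (4 * (G.edgeFinset.card : ℝ) ^ 3
              - 3 * (G.edgeFinset.card : ℝ) * ∑ v, (G.degree v : ℝ) ^ 2
              + ∑ v, (G.degree v : ℝ) ^ 3)) := by
  set d : V → ℝ := fun v => (G.degree v : ℝ) with hd
  set D : Matrix V V ℝ := Matrix.diagonal d with hD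
  set A : Matrix V V ℝ := G.adjMatrix ℝ with hA
  set M : Matrix V V ℝ := α • D + (1 - α) • A with hM
  have hHerm : M.IsHermitian := by
    rw [Matrix.IsHermitian, Matrix.conjTranspose_eq_transpose_of_trivial, hM, hD, hA,
      Matrix.transpose_add, Matrix.transpose_smul, Matrix.transpose_smul,
      Matrix.diagonal_transpose, (SimpleGraph.isSymm_adjMatrix G)]
  -- traces
  have hDA : Matrix.trace (D * A) = 0 := trace_diag_mul_adj G d
  have hAD : Matrix.trace (A * D) = 0 := by rw [Matrix.trace_mul_comm]; exact hDA
  have hAA : Matrix.trace (A * A) = ∑ v, d v := trace_adj_sq G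
  have hDD : Matrix.trace (D * D) = ∑ v, d v ^ 2 := by
    rw [hD, Matrix.diagonal_mul_diagonal, Matrix.trace_diagonal]
    exact Finset.sum_congr rfl fun v _ => (sq (d v)).symm
  have hDDD : Matrix.trace (D * D * D) = ∑ v, d v ^ 3 := by
    rw [hD, Matrix.diagonal_mul_diagonal, Matrix.diagonal_mul_diagonal, Matrix.trace_diagonal]
    exact Finset.sum_congr rfl fun v _ => by ring
  have hDDA : Matrix.trace (D * D * A) = 0 := by
    rw [hD, Matrix.diagonal_mul_diagonal]
    exact trace_diag_mul_adj G _
  have hDAD : Matrix.trace (D * A * D) = 0 := by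
    rw [Matrix.trace_mul_cycle]
    exact hDDA
  have hADD : Matrix.trace (A * D * D) = 0 := by
    rw [Matrix.trace_mul_cycle]
    exact hDAD
  have hDAA : Matrix.trace (D * A * A) = ∑ v, d v ^ 2 := by
    rw [hD, trace_diag_mul_adj_sq G d]
    exact Finset.sum_congr rfl fun v _ => (sq (d v)).symm
  have hAAD : Matrix.trace (A * A * D) = ∑ v, d v ^ 2 := by
    rw [Matrix.trace_mul_cycle]
    exact hDAA
  have hADA : Matrix.trace (A * D * A) = ∑ v, d v ^ 2 := by
    rw [Matrix.trace_mul_cycle]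
    exact hAAD
  have hAAA : Matrix.trace (A * A * A) = 6 * ((G.cliqueFinset 3).card : ℝ) :=
    trace_adjMatrix_cube G
  have hT1 : Matrix.trace M = α * ∑ v, d v := by
    rw [hM, Matrix.trace_add, Matrix.trace_smul, Matrix.trace_smul, hA,
      SimpleGraph.trace_adjMatrix, hD, Matrix.trace_diagonal]
    simp
  have hT2 : Matrix.trace (M ^ 2)
      = α^2 * ∑ v, d v ^ 2 + (1-α)^2 * ∑ v, d v := by
    rw [pow_two, hM]
    simp only [add_mul, mul_add, Matrix.smul_mul, Matrix.mul_smul, smul_smul,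
      Matrix.trace_add, Matrix.trace_smul, smul_eq_mul]
    rw [hDA, hAD, hAA, hDD]
    ring
  have hT3 : Matrix.trace (M ^ 3)
      = α^3 * ∑ v, d v ^ 3 + 3 * α * (1-α)^2 * ∑ v, d v ^ 2
        + 6 * (1-α)^3 * ((G.cliqueFinset 3).card : ℝ) := by
    rw [show (3:ℕ) = 2 + 1 from rfl, pow_succ, pow_two, hM]
    simp only [add_mul, mul_add, Matrix.smul_mul, Matrix.mul_smul, smul_smul,
      Matrix.trace_add, Matrix.trace_smul, smul_eq_mul]
    rw [hDDD, hDDA, hDAD, hADD, hDAA, hAAD, hADA, hAAA]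
    ring
  have hm : (∑ v, d v) = 2 * (G.edgeFinset.card : ℝ) := by
    rw [hd]
    norm_cast
    rw [← G.sum_degrees_eq_twice_card_edges, Nat.cast_sum]
  rw [charpoly_coeff_card_sub_three hHerm hn, hT1, hT2, hT3, hm]
  ring
end

section
/- Let R be a commutative ring, let A be an n×n matrix over R, and let h_1,…,h_n ∈ R. Then for every x ∈ R, det(x·I_n − (A + diag(h_1,…,h_n))) = Σ_{S ⊆ {1,…,n}} (∏_{i∈S} (−h_i)) · det of the principal submatrix of (x·I_n − A) obtained by deleting the rows and columns indexed by S (where the term for S = ∅ is det(x·I_n − A) and the term for S = {1,…,n} is 1). -/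
/-!
The determinant is multilinear in the rows, and row `i` of `M + diagonal d` is `M i + d i • eᵢ`.
Expanding over all rows gives one term per set `S` of rows in which `d i • eᵢ` was chosen; after
pulling out `∏ i ∈ S, d i`, the rows in `S` are unit rows, and a determinant with unit rows on `S`
is the principal minor on the complement of `S`. With `M = x • 1 - A` and `d = -h` this is the
theorem.
-/

open Matrix BigOperators

namespace Matrix

variable {ι R : Type*} [Fintype ι] [DecidableEq ι] [CommRing R]

theorem det_of_piecewise_one_rows (M : Matrix ι ι R) (S : Finset ι) :
    (of (S.piecewise (fun i => (1 : Matrix ι ι R) i) M)).det =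
      (M.submatrix (fun i : {i // i ∉ S} => (i : ι)) (fun i : {i // i ∉ S} => (i : ι))).det := by
  rw [twoBlockTriangular_det _ (· ∉ S)]
  · have hS : toSquareBlockProp (of (S.piecewise (fun i => (1 : Matrix ι ι R) i) M))
        (fun i => ¬i ∉ S) = 1 := by
      ext i j
      simp [toSquareBlockProp_def, Finset.piecewise, not_not.mp i.2, one_apply,
        Subtype.ext_iff]
    rw [hS, det_one, mul_one]
    congr 1
    ext i j
    simp [toSquareBlockProp_def, Finset.piecewise, i.2]
  · intro i hi j hj
    have hij : i ≠ j := fun h => hj (h ▸ not_not.mp hi)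
    simp [Finset.piecewise, not_not.mp hi, hij]

theorem det_add_diagonal (M : Matrix ι ι R) (d : ι → R) :
    (M + diagonal d).det =
      ∑ S : Finset ι, (∏ i ∈ S, d i) *
        (M.submatrix (fun i : {i // i ∉ S} => (i : ι)) (fun i : {i // i ∉ S} => (i : ι))).det := by
  rw [add_comm]
  refine (detRowAlternating.map_add_univ (diagonal d) M).trans
    (Finset.sum_congr rfl fun S _ => ?_)
  set N : ι → ι → R := S.piecewise (fun i => (1 : Matrix ι ι R) i) M
  have hrows : S.piecewise (diagonal d) M = S.piecewise (fun i => d i • N i) N := by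
    funext i
    by_cases hi : i ∈ S
    · ext j
      simp [N, Finset.piecewise, hi, diagonal_apply, one_apply]
    · simp [N, Finset.piecewise, hi]
  rw [hrows, ← det_of_piecewise_one_rows]
  exact detRowAlternating.map_piecewise_smul d N S

end Matrix

/-- For an `n×n` matrix `A` over a commutative ring `R`, elements
`h_1, …, h_n ∈ R` and `x ∈ R`,
`det(x·I − (A + diag h)) = Σ_{S ⊆ {1,…,n}} (∏_{i∈S} (−h_i)) · det((x·I − A)` restricted to
the rows and columns not in `S)`. -/
theorem det_sub_add_diagonal_expansion {R : Type*} [CommRing R] {n : ℕ}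
    (A : Matrix (Fin n) (Fin n) R) (h : Fin n → R) (x : R) :
    (x • (1 : Matrix (Fin n) (Fin n) R) - (A + Matrix.diagonal h)).det =
      ∑ S : Finset (Fin n), (∏ i ∈ S, (-h i)) *
        ((x • (1 : Matrix (Fin n) (Fin n) R) - A).submatrix
          (fun i : {i : Fin n // i ∉ S} => (i : Fin n))
          (fun i : {i : Fin n // i ∉ S} => (i : Fin n))).det := by
  rw [← det_add_diagonal, ← diagonal_neg]
  congr 1
  abel
end

section
/- Let G be a finite simple graph with n vertices, degree sequence d_1,…,d_n, and t_G triangles, and let α be a real number. Then tr(A_α(G)³) = α³·Σ_{i=1}^n d_i³ + 3α(1−α)²·Σ_{i=1}^n d_i² + 6(1−α)³·t_G. -/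
/-!
Expanding the cube and using cyclicity of the trace, `tr((αD + (1-α)A)³)` is a combination of
`tr D³ = Σ dᵥ³`, `tr(D²A) = 0` (as `A` has zero diagonal), `tr(DA²) = Σ dᵥ²` (as `(A²)ᵥᵥ = dᵥ`)
and `tr A³`. The last one counts ordered triples `(x, y, z)` with `x ~ y ~ z ~ x`; sending such a
triple to `{x, y, z}` makes it a `3!`-to-one map onto the triangles.
-/

open Finset Matrix

namespace Matrix

variable {n R : Type*} [Fintype n] [DecidableEq n]

theorem trace_diagonal_mul [NonUnitalNonAssocSemiring R] (d : n → R) (A : Matrix n n R) :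
    trace (diagonal d * A) = ∑ i, d i * A i i := by
  simp [trace, diagonal_mul]

theorem trace_add_pow_three [CommSemiring R] (X Y : Matrix n n R) :
    trace ((X + Y) ^ 3) =
      trace (X ^ 3) + 3 * trace (X ^ 2 * Y) + 3 * trace (X * Y ^ 2) + trace (Y ^ 3) := by
  have hXYX : trace (X * Y * X) = trace (X * X * Y) := trace_mul_cycle ..
  have hYXX : trace (Y * X * X) = trace (X * X * Y) := by rw [trace_mul_cycle, trace_mul_cycle]
  have hYXY : trace (Y * X * Y) = trace (X * Y * Y) := by rw [trace_mul_cycle, trace_mul_cycle]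
  have hYYX : trace (Y * Y * X) = trace (X * Y * Y) := trace_mul_cycle ..
  simp only [pow_succ, pow_zero, Matrix.one_mul, add_mul, mul_add, ← Matrix.mul_assoc, trace_add,
    hXYX, hYXX, hYXY, hYYX]
  ring

end Matrix

theorem Finset.card_filter_mem_erase_erase {α : Type*} [Fintype α] [DecidableEq α]
    (s : Finset α) :
    #{p : α × α × α | p.1 ∈ s ∧ p.2.1 ∈ s.erase p.1 ∧ p.2.2 ∈ (s.erase p.1).erase p.2.1}
      = #s * (#s - 1) * (#s - 2) := by
  rw [card_filter]
  simp only [Fintype.sum_prod_type, ite_and, sum_ite_irrel, sum_const_zero, sum_ite_mem,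
    univ_inter]
  simp +contextual [card_erase_of_mem, mul_assoc, Nat.sub_sub]

namespace SimpleGraph

variable {V : Type*} [DecidableEq V]

theorem IsNClique.adj_cycle_and_eq_iff {G : SimpleGraph V} {s : Finset V} (hs : G.IsNClique 3 s) {x y z : V} :
    (G.Adj x y ∧ G.Adj y z ∧ G.Adj z x) ∧ {x, y, z} = s ↔
      x ∈ s ∧ y ∈ s.erase x ∧ z ∈ (s.erase x).erase y := by
  constructor
  · rintro ⟨⟨hxy, hyz, hzx⟩, rfl⟩
    simp [hxy.ne', hyz.ne', hzx.ne]
  · rintro ⟨hx, hy, hz⟩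
    obtain ⟨hyx, hy⟩ := mem_erase.1 hy
    obtain ⟨hzy, hzx, hz⟩ := by simpa only [mem_erase] using hz
    refine ⟨⟨hs.1 hx hy hyx.symm, hs.1 hy hz hzy.symm, hs.1 hz hx hzx⟩, ?_⟩
    refine eq_of_subset_of_card_le (by simp [insert_subset_iff, *]) ?_
    rw [hs.card_eq, card_eq_three.2 ⟨x, y, z, hyx.symm, hzx.symm, hzy.symm, rfl⟩]

variable [Fintype V] (G : SimpleGraph V) [DecidableRel G.Adj]

def orderedTriangles : Finset (V × V × V) :=
  {p | G.Adj p.1 p.2.1 ∧ G.Adj p.2.1 p.2.2 ∧ G.Adj p.2.2 p.1}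

theorem card_orderedTriangles : #G.orderedTriangles = 6 * #(G.cliqueFinset 3) := by
  rw [card_eq_sum_card_fiberwise (f := fun p ↦ {p.1, p.2.1, p.2.2}) (t := G.cliqueFinset 3),
    mul_comm, ← smul_eq_mul, ← sum_const]
  · refine sum_congr rfl fun s hs ↦ ?_
    have hs := mem_cliqueFinset_iff.1 hs
    rw [orderedTriangles, filter_filter, filter_congr fun p _ ↦ hs.adj_cycle_and_eq_iff,
      card_filter_mem_erase_erase, hs.card_eq]
  · rintro ⟨x, y, z⟩ hp
    obtain ⟨hxy, hyz, hzx⟩ := (mem_filter.1 hp).2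
    exact mem_cliqueFinset_iff.2 (is3Clique_triple_iff.2 ⟨hxy, hzx.symm, hyz⟩)

theorem trace_adjMatrix_pow_three_eq_card_orderedTriangles (R : Type*) [Semiring R] :
    trace (G.adjMatrix R ^ 3) = (#G.orderedTriangles : R) := by
  rw [orderedTriangles]
  simp only [pow_succ, pow_zero, Matrix.one_mul, trace, diag_apply, mul_apply, adjMatrix_apply,
    card_filter, Fintype.sum_prod_type, sum_mul, ite_zero_mul_ite_zero, mul_one, and_assoc]
  push_cast
  exact sum_congr rfl fun x _ ↦ sum_comm

theorem trace_adjMatrix_pow_three (R : Type*) [Semiring R] :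
    trace (G.adjMatrix R ^ 3) = 6 * (#(G.cliqueFinset 3) : R) := by
  rw [trace_adjMatrix_pow_three_eq_card_orderedTriangles, card_orderedTriangles, Nat.cast_mul,
    Nat.cast_ofNat]

variable {R : Type*} [Semiring R]

theorem trace_diagonal_mul_adjMatrix (d : V → R) :
    trace (diagonal d * G.adjMatrix R) = 0 := by
  simp [trace_diagonal_mul]

theorem trace_diagonal_mul_adjMatrix_sq (d : V → R) :
    trace (diagonal d * G.adjMatrix R ^ 2) = ∑ v, d v * G.degree v := by
  simp only [trace_diagonal_mul, sq, adjMatrix_mul_self_apply_self]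

end SimpleGraph

/-- For a finite simple graph `G` with degree sequence `(d_v)` and `t_G`
triangles, and a real number `α`, the matrix `A_α(G) = α·D(G) + (1−α)·A(G)` satisfies
`tr(A_α(G)³) = α³·Σ d³ + 3α(1−α)²·Σ d² + 6(1−α)³·t_G`. -/
theorem trace_Aalpha_cube {V : Type*} [Fintype V] [DecidableEq V]
    (G : SimpleGraph V) [DecidableRel G.Adj] (α : ℝ) :
    Matrix.trace
        ((α • Matrix.diagonal (fun v => (G.degree v : ℝ)) + (1 - α) • G.adjMatrix ℝ) ^ 3)
      = α ^ 3 * ∑ v, (G.degree v : ℝ) ^ 3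
        + 3 * α * (1 - α) ^ 2 * ∑ v, (G.degree v : ℝ) ^ 2
        + 6 * (1 - α) ^ 3 * ((G.cliqueFinset 3).card : ℝ) := by
  rw [trace_add_pow_three]
  simp only [smul_pow, smul_mul_smul_comm, trace_smul, diagonal_pow, trace_diagonal,
    G.trace_diagonal_mul_adjMatrix, G.trace_diagonal_mul_adjMatrix_sq, G.trace_adjMatrix_pow_three,
    Pi.pow_apply, smul_eq_mul, ← sq]
  ring
end

section
/- Let G be a finite simple bipartite graph that is determined by its Laplacian spectrum, meaning that every finite simple graph whose Laplacian matrix L = D − A has the same characteristic polynomial as L(G) is isomorphic to G. Then G is determined by its A_α-spectrum: every finite simple graph H such that, for every real α ∈ [0,1], the characteristic polynomials of A_α(H) and A_α(G) coincide, is isomorphic to G. -/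
open Matrix Polynomial

/-!
Since `αD + (1 - α)A` is a multiple of `D + sA` with `s = (1 - α) / α`, and the characteristic
polynomial of `cM` is determined by that of `M`, the `A_α`-spectra for `α ∈ (0, 1]` give the
spectra of `D + sA` for all `s ≥ 0`. The coefficients of the characteristic polynomial of `D + sA`
are polynomials in `s`, so agreement for infinitely many `s` gives agreement at `s = -1`, i.e.
of the Laplacian spectra.
-/

namespace Polynomial

theorem eq_of_infinite_map_evalRingHom_eq {R : Type*} [CommRing R] [IsDomain R] (p q : R[X][X])
    (h : {s : R | p.map (evalRingHom s) = q.map (evalRingHom s)}.Infinite) : p = q := by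
  ext1 k
  refine eq_of_infinite_eval_eq _ _ (h.mono fun s hs => ?_)
  simpa only [Set.mem_ofPred_eq, coeff_map, coe_evalRingHom] using congr_arg (coeff · k) hs

end Polynomial

theorem smul_inv_smul_add_one_sub_inv_smul {K M : Type*} [Field K] [AddCommGroup M] [Module K M]
    {c : K} (hc : c ≠ 0) (x y : M) : c • (c⁻¹ • x + (1 - c⁻¹) • y) = x + (c - 1) • y := by
  rw [smul_add, smul_smul, smul_smul, mul_inv_cancel₀ hc, mul_sub, mul_one, mul_inv_cancel₀ hc,
    one_smul]

namespace Matrix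

theorem map_evalRingHom_pencil {n R : Type*} [CommRing R] (D A : Matrix n n R) (s : R) :
    (D.map C + (X : R[X]) • A.map C).map (evalRingHom s) = D + s • A := by
  ext i j
  simp [mul_comm (A i j)]

variable {n m : Type*} [Fintype n] [DecidableEq n] [Fintype m] [DecidableEq m]

theorem eval_charpoly_smul {K : Type*} [Field K] (M : Matrix n n K) {c : K} (hc : c ≠ 0)
    (x : K) : (c • M).charpoly.eval x = c ^ Fintype.card n * M.charpoly.eval (c⁻¹ * x) := by
  rw [eval_charpoly, eval_charpoly, ← det_smul, smul_sub, scalar_apply, scalar_apply,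
    ← diagonal_smul]
  simp only [Pi.smul_def, smul_eq_mul, mul_inv_cancel_left₀ hc]

theorem charpoly_smul_eq_of_charpoly_eq {K : Type*} [Field K] [Infinite K]
    {M : Matrix n n K} {N : Matrix m m K} (h : M.charpoly = N.charpoly) (c : K) :
    (c • M).charpoly = (c • N).charpoly := by
  have hcard : Fintype.card n = Fintype.card m := by
    rw [← charpoly_natDegree_eq_dim M, ← charpoly_natDegree_eq_dim N, h]
  rcases eq_or_ne c 0 with rfl | hc
  · rw [zero_smul, zero_smul, charpoly_zero, charpoly_zero, hcard]
  · exact Polynomial.funext fun x => by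
      rw [eval_charpoly_smul M hc, eval_charpoly_smul N hc, h, hcard]

theorem charpoly_add_smul_eq_of_infinite {R : Type*} [CommRing R] [IsDomain R]
    {D A : Matrix n n R} {D' A' : Matrix m m R}
    (h : {s : R | (D + s • A).charpoly = (D' + s • A').charpoly}.Infinite) (s : R) :
    (D + s • A).charpoly = (D' + s • A').charpoly := by
  have hpencil : (D.map C + (X : R[X]) • A.map C).charpoly
      = (D'.map C + (X : R[X]) • A'.map C).charpoly := by
    refine eq_of_infinite_map_evalRingHom_eq _ _ (h.mono fun t ht => ?_)
    simpa only [← charpoly_map, map_evalRingHom_pencil] using ht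
  simpa only [← charpoly_map, map_evalRingHom_pencil] using
    congr_arg (Polynomial.map (evalRingHom s)) hpencil

theorem charpoly_sub_eq_of_forall_mem_Icc {K : Type*} [Field K] [LinearOrder K]
    [IsStrictOrderedRing K] {D A : Matrix n n K} {D' A' : Matrix m m K}
    (h : ∀ α ∈ Set.Icc (0 : K) 1,
      (α • D + (1 - α) • A).charpoly = (α • D' + (1 - α) • A').charpoly) :
    (D - A).charpoly = (D' - A').charpoly := by
  have hpencil : ∀ s : K, 0 ≤ s → (D + s • A).charpoly = (D' + s • A').charpoly := by
    intro s hs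
    have hpos : 0 < 1 + s := by linarith
    have hα : (1 + s)⁻¹ ∈ Set.Icc (0 : K) 1 :=
      ⟨inv_nonneg.2 hpos.le, inv_le_one_of_one_le₀ (by linarith)⟩
    rw [← add_sub_cancel_left 1 s, ← smul_inv_smul_add_one_sub_inv_smul hpos.ne' D A,
      ← smul_inv_smul_add_one_sub_inv_smul hpos.ne' D' A']
    exact charpoly_smul_eq_of_charpoly_eq (h _ hα) _
  have hall := charpoly_add_smul_eq_of_infinite
    ((Set.Ici_infinite (0 : K)).mono hpencil) (-1)
  simpa only [neg_one_smul, ← sub_eq_add_neg] using hall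

end Matrix

theorem bipartite_L_DS_implies_Aalpha_DS_general {V : Type} [Fintype V] [DecidableEq V]
    (G : SimpleGraph V) [DecidableRel G.Adj]
    (hLDS : ∀ (W : Type) [Fintype W] [DecidableEq W] (H : SimpleGraph W),
      ∀ [DecidableRel H.Adj],
      Matrix.charpoly (Matrix.diagonal (fun w => (H.degree w : ℝ)) - H.adjMatrix ℝ)
        = Matrix.charpoly (Matrix.diagonal (fun v => (G.degree v : ℝ)) - G.adjMatrix ℝ)
        → Nonempty (G ≃g H)) :
    ∀ (W : Type) [Fintype W] [DecidableEq W] (H : SimpleGraph W),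
      ∀ [DecidableRel H.Adj],
      (∀ α : ℝ, α ∈ Set.Icc (0 : ℝ) 1 →
        Matrix.charpoly
            (α • Matrix.diagonal (fun w => (H.degree w : ℝ)) + (1 - α) • H.adjMatrix ℝ)
          = Matrix.charpoly
            (α • Matrix.diagonal (fun v => (G.degree v : ℝ)) + (1 - α) • G.adjMatrix ℝ))
      → Nonempty (G ≃g H) :=
  fun W _ _ H _ hspec => hLDS W H (charpoly_sub_eq_of_forall_mem_Icc hspec)

/-- Let `G` be a finite simple bipartite graph that is determined by its
Laplacian spectrum (every finite simple graph whose Laplacian `L = D − A` has the same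
characteristic polynomial as `L(G)` is isomorphic to `G`). Then `G` is determined by its
`A_α`-spectrum: every finite simple graph `H` such that for all `α ∈ [0,1]` the
characteristic polynomials of `A_α(H)` and `A_α(G)` coincide is isomorphic to `G`. -/
theorem bipartite_L_DS_implies_Aalpha_DS {V : Type} [Fintype V] [DecidableEq V]
    (G : SimpleGraph V) [DecidableRel G.Adj]
    (hbip : G.Colorable 2)
    (hLDS : ∀ (W : Type) [Fintype W] [DecidableEq W] (H : SimpleGraph W),
      ∀ [DecidableRel H.Adj],
      Matrix.charpoly (Matrix.diagonal (fun w => (H.degree w : ℝ)) - H.adjMatrix ℝ)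
        = Matrix.charpoly (Matrix.diagonal (fun v => (G.degree v : ℝ)) - G.adjMatrix ℝ)
        → Nonempty (G ≃g H)) :
    ∀ (W : Type) [Fintype W] [DecidableEq W] (H : SimpleGraph W),
      ∀ [DecidableRel H.Adj],
      (∀ α : ℝ, α ∈ Set.Icc (0 : ℝ) 1 →
        Matrix.charpoly
            (α • Matrix.diagonal (fun w => (H.degree w : ℝ)) + (1 - α) • H.adjMatrix ℝ)
          = Matrix.charpoly
            (α • Matrix.diagonal (fun v => (G.degree v : ℝ)) + (1 - α) • G.adjMatrix ℝ))
      → Nonempty (G ≃g H) :=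
  bipartite_L_DS_implies_Aalpha_DS_general G hLDS
end
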